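/- arXiv:1712.08780 — 2 statements merged into one kernel-verified Lean document; each statement's English description precedes it below -/
import Mathlib

section
/- Let G and H be graphs, let v ∈ V(H), and let S be a legal open neighborhood sequence in the direct product G × H. Then the number of vertices of S lying in the G-layer G^v = {(g,v) : g ∈ V(G)} is at most γ_gr^t(G). -/
open SimpleGraph

/-- A legal open neighborhood sequence in `G`. -/
def IsOpenLegal {α : Type*} (G : SimpleGraph α) (L : List α) : Prop :=
  L.Nodup ∧ ∀ i : Fin L.length, ∃ w, G.Adj (L.get i) w ∧
    ∀ j : Fin L.length, j < i → ¬ G.Adj (L.get j) w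

/-- The Grundy total domination number of `G`. -/
noncomputable def grundyT {α : Type*} (G : SimpleGraph α) : ℕ :=
  sSup {n | ∃ L : List α, IsOpenLegal G L ∧ L.length = n}

/-- A legal closed neighborhood (dominating) sequence in `G`. -/
def IsClosedLegal {α : Type*} (G : SimpleGraph α) (L : List α) : Prop :=
  L.Nodup ∧ ∀ i : Fin L.length, ∃ w, (G.Adj (L.get i) w ∨ L.get i = w) ∧
    ∀ j : Fin L.length, j < i → ¬ (G.Adj (L.get j) w ∨ L.get j = w)

/-- The Grundy domination number of `G`. -/
noncomputable def grundyDom {α : Type*} (G : SimpleGraph α) : ℕ :=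
  sSup {n | ∃ L : List α, IsClosedLegal G L ∧ L.length = n}

/-- The direct (tensor) product of simple graphs. -/
def directProd {α β : Type*} (G : SimpleGraph α) (H : SimpleGraph β) : SimpleGraph (α × β) where
  Adj x y := G.Adj x.1 y.1 ∧ H.Adj x.2 y.2
  symm := ⟨fun _ _ h => ⟨h.1.symm, h.2.symm⟩⟩
  loopless := ⟨fun x h => h.1.ne rfl⟩

/-- The lexicographic product of simple graphs. -/
def lexProd {α β : Type*} (G : SimpleGraph α) (H : SimpleGraph β) : SimpleGraph (α × β) where
  Adj x y := G.Adj x.1 y.1 ∨ (x.1 = y.1 ∧ H.Adj x.2 y.2)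
  symm := by
    constructor
    rintro x y (h | ⟨h1, h2⟩)
    · exact Or.inl h.symm
    · exact Or.inr ⟨h1.symm, h2.symm⟩
  loopless := by
    constructor
    rintro x (h | ⟨_, h⟩)
    · exact h.ne rfl
    · exact h.ne rfl

/-- The strong product of simple graphs. -/
def strongProd {α β : Type*} (G : SimpleGraph α) (H : SimpleGraph β) : SimpleGraph (α × β) where
  Adj x y := (G.Adj x.1 y.1 ∧ x.2 = y.2) ∨ (x.1 = y.1 ∧ H.Adj x.2 y.2) ∨
    (G.Adj x.1 y.1 ∧ H.Adj x.2 y.2)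
  symm := by
    constructor
    rintro x y (⟨h, e⟩ | ⟨e, h⟩ | ⟨h1, h2⟩)
    · exact Or.inl ⟨h.symm, e.symm⟩
    · exact Or.inr (Or.inl ⟨e.symm, h.symm⟩)
    · exact Or.inr (Or.inr ⟨h1.symm, h2.symm⟩)
  loopless := by
    constructor
    rintro x (⟨h, _⟩ | ⟨_, h⟩ | ⟨h, _⟩)
    · exact h.ne rfl
    · exact h.ne rfl
    · exact h.ne rfl

/-- The minimum number of complete bipartite subgraphs of `G` covering all edges of `G`. -/
noncomputable def bc {α : Type*} (G : SimpleGraph α) : ℕ :=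
  sInf {k | ∃ A B : Fin k → Set α,
    (∀ i a b, a ∈ A i → b ∈ B i → G.Adj a b) ∧
    (∀ u v, G.Adj u v → ∃ i, (u ∈ A i ∧ v ∈ B i) ∨ (v ∈ A i ∧ u ∈ B i))}

/-- `aD G L` is the number of entries of `L` not adjacent to any earlier entry. -/
noncomputable def aD {α : Type*} (G : SimpleGraph α) (L : List α) : ℕ :=
  {i : Fin L.length | ∀ j : Fin L.length, j < i → ¬ G.Adj (L.get j) (L.get i)}.ncard

/-- The vertex cover number of `G`. -/
noncomputable def vertexCoverNum {α : Type*} (G : SimpleGraph α) : ℕ :=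
  sInf {n | ∃ S : Finset α, S.card = n ∧ ∀ u v, G.Adj u v → u ∈ S ∨ v ∈ S}

/-- The independence number of `G`. -/
noncomputable def indepNum {α : Type*} (G : SimpleGraph α) : ℕ :=
  sSup {n | ∃ S : Finset α, S.card = n ∧ ∀ u ∈ S, ∀ v ∈ S, ¬ G.Adj u v}

/-!
The entries of `S` in the layer `G^v` form a subsequence of `S`, which is again legal. Projecting
it to `G` keeps it legal: if `(w, w')` is a footprint of `(g, v)`, then `w` is a footprint of `g`,
since an earlier `g'` adjacent to `w` would make `(g', v)` adjacent to `(w, w')` through the same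
edge `v w'`.
-/

section

variable {α β : Type*} {G : SimpleGraph α}

theorem IsOpenLegal.length_le_grundyT [Finite α] {L : List α} (h : IsOpenLegal G L) :
    L.length ≤ grundyT G := by
  have := Fintype.ofFinite α
  refine le_csSup ⟨Fintype.card α, ?_⟩ ⟨L, h, rfl⟩
  rintro n ⟨L', hL', rfl⟩
  exact hL'.1.length_le_card

theorem IsOpenLegal.sublist {L L' : List α} (h : IsOpenLegal G L) (hsub : L'.Sublist L) :
    IsOpenLegal G L' := by
  obtain ⟨f, hf⟩ := List.sublist_iff_exists_fin_orderEmbedding_get_eq.mp hsub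
  refine ⟨h.1.sublist hsub, fun i => ?_⟩
  obtain ⟨w, hw, hprev⟩ := h.2 (f i)
  exact ⟨w, hf i ▸ hw, fun j hj => hf j ▸ hprev (f j) (f.lt_iff_lt.mpr hj)⟩

theorem IsOpenLegal.map_fst_of_forall_snd_eq {H : SimpleGraph β} {v : β} {L : List (α × β)}
    (h : IsOpenLegal (directProd G H) L) (hv : ∀ x ∈ L, x.2 = v) :
    IsOpenLegal G (L.map Prod.fst) := by
  refine ⟨h.1.map_on fun x hx y hy hxy => Prod.ext hxy ((hv x hx).trans (hv y hy).symm), ?_⟩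
  intro i
  have hget : ∀ k : Fin (L.map Prod.fst).length,
      (L.map Prod.fst).get k = (L.get (k.cast (List.length_map _))).1 := fun k => by simp
  obtain ⟨w, hw, hprev⟩ := h.2 (i.cast (List.length_map _))
  refine ⟨w.1, hget i ▸ hw.1, fun j hj hadj => hprev (j.cast (List.length_map _)) hj ⟨?_, ?_⟩⟩
  · exact hget j ▸ hadj
  · rw [hv _ (List.get_mem _ _), ← hv _ (List.get_mem _ _)]
    exact hw.2

end

theorem layer_count_le_grundyT_general {α β : Type*} [Fintype α] [DecidableEq β]
    (G : SimpleGraph α) (H : SimpleGraph β) (v : β) (S : List (α × β))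
    (hS : IsOpenLegal (directProd G H) S) :
    (S.filter (fun x => x.2 = v)).length ≤ grundyT G := by
  have hlayer : IsOpenLegal G ((S.filter (fun x => x.2 = v)).map Prod.fst) :=
    (hS.sublist List.filter_sublist).map_fst_of_forall_snd_eq
      fun x hx => by simpa using List.of_mem_filter hx
  simpa using hlayer.length_le_grundyT

theorem layer_count_le_grundyT {α β : Type*} [Fintype α] [Fintype β] [DecidableEq β]
    (G : SimpleGraph α) (H : SimpleGraph β) (v : β) (S : List (α × β))
    (hS : IsOpenLegal (directProd G H) S) :
    (S.filter (fun x => x.2 = v)).length ≤ grundyT G :=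
  layer_count_le_grundyT_general G H v S hS
end

section
/- For n ≥ 2, the Grundy total domination number of the path P_n equals n if n is even and n − 1 if n is odd; for n ≥ 3, the Grundy total domination number of the cycle C_n equals n − 2 if n is even and n − 1 if n is odd. -/
open SimpleGraph

/-!
Upper bounds. The witnesses `w` of the vertices of a legal sequence are distinct (the witness of
a later vertex avoids the neighbourhood of an earlier one), so in a bipartite graph the listed
vertices of one colour class inject into the other class: listing every vertex of a path forces
its two classes to have equal size, impossible when `n` is odd. Moreover, if every vertex of a set
`S` is listed, the witness of the last listed vertex of `S` has no other neighbour in `S`; in a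
cycle every vertex has two neighbours, so whenever `S` contains all neighbours of neighbours of its
vertices, some vertex of `S` is missing. Taking `S` to be everything, or either colour class of an
even cycle, bounds the length by `n - 1`, resp. `n - 2`.

Lower bounds. `P_{2h}` is listed completely by its even vertices upwards followed by its odd
vertices downwards, and `P_{2h}` is an induced subgraph of `P_{2h+1}`, `C_{2h+1}` and `C_{2h+2}`.
-/

theorem List.Nodup.length_add_card_le {α : Type*} [Fintype α] {L : List α}
    (hL : L.Nodup) {s : Finset α} (hs : ∀ v ∈ s, v ∉ L) : L.length + s.card ≤ Fintype.card α := by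
  classical
  rw [← List.toFinset_card_of_nodup hL, ← Finset.card_union_of_disjoint]
  · exact Finset.card_le_univ _
  · exact Finset.disjoint_left.2 fun v hv hvs => hs v hvs (List.mem_toFinset.1 hv)

theorem grundyT_eq_of_forall_le {α : Type*} {G : SimpleGraph α} {k : ℕ}
    (hle : ∀ L, IsOpenLegal G L → L.length ≤ k) (hex : ∃ L, IsOpenLegal G L ∧ L.length = k) :
    grundyT G = k :=
  IsGreatest.csSup_eq ⟨hex, by rintro _ ⟨L, hL, rfl⟩; exact hle L hL⟩

theorem isOpenLegal_ofFn {α : Type*} {G : SimpleGraph α} {k : ℕ} {v w : Fin k → α}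
    (hv : Function.Injective v) (hadj : ∀ i, G.Adj (v i) (w i))
    (hfresh : ∀ i j, j < i → ¬ G.Adj (v j) (w i)) : IsOpenLegal G (List.ofFn v) := by
  refine ⟨List.nodup_ofFn.2 hv, fun i => ⟨w (i.cast (List.length_ofFn)), ?_, fun j hj => ?_⟩⟩
  · rw [List.get_ofFn]
    exact hadj _
  · rw [List.get_ofFn]
    exact hfresh _ _ hj

namespace IsOpenLegal

variable {α : Type*} {G : SimpleGraph α} {L : List α}

theorem card_le_card (hL : IsOpenLegal G L) {s t : Finset α} (hs : ∀ v ∈ s, v ∈ L)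
    (hst : ∀ v ∈ s, ∀ w, G.Adj v w → w ∈ t) : s.card ≤ t.card := by
  classical
  choose W hadj hfresh using hL.2
  have hW : Function.Injective W := by
    intro i j hij
    by_contra hne
    rcases lt_or_gt_of_ne hne with h | h
    · exact hfresh j i h (hij ▸ hadj i)
    · exact hfresh i j h (hij ▸ hadj j)
  calc s.card ≤ (Finset.univ.filter fun i => L.get i ∈ s).card :=
        Finset.card_le_card_of_surjOn L.get fun v hv => by
          obtain ⟨i, rfl⟩ := List.mem_iff_get.1 (hs v hv)
          exact ⟨i, by simpa using hv, rfl⟩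
    _ ≤ t.card :=
        Finset.card_le_card_of_injOn W
          (fun i hi => hst _ (Finset.mem_filter.1 hi).2 _ (hadj i)) hW.injOn

theorem length_lt_card_of_odd [Fintype α] (hL : IsOpenLegal G L) (C : G.Coloring Bool)
    (hodd : Odd (Fintype.card α)) : L.length < Fintype.card α := by
  classical
  refine hL.1.length_le_card.lt_of_ne fun hlen => ?_
  have hall : ∀ v, v ∈ L := fun v => by
    by_contra hv
    have := hL.1.length_add_card_le (s := {v}) (by simpa using hv)
    simp only [Finset.card_singleton] at this
    omega
  have hclass : ∀ b, (Finset.univ.filter fun v => C v = b).card ≤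
      (Finset.univ.filter fun v => C v = !b).card := fun b =>
    hL.card_le_card (fun v _ => hall v) fun v hv w hvw => by
      simp only [Finset.mem_filter, Finset.mem_univ, true_and] at hv ⊢
      rw [Bool.eq_not_iff, ← hv]
      exact (C.valid hvw).symm
  have hsum := Finset.card_filter_add_card_filter_not (s := Finset.univ) fun v => C v = true
  simp only [Bool.not_eq_true, Finset.card_univ] at hsum
  have htf := hclass true
  have hft := hclass false
  rw [Bool.not_true] at htf
  rw [Bool.not_false] at hft
  exact Nat.not_even_iff_odd.2 hodd ⟨(Finset.univ.filter fun v => C v = true).card, by omega⟩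

theorem exists_private_neighbor (hL : IsOpenLegal G L) {S : Set α} (hS : ∀ v ∈ S, v ∈ L)
    (hne : S.Nonempty) : ∃ v ∈ S, ∃ w, G.Adj v w ∧ ∀ x ∈ S, G.Adj x w → x = v := by
  classical
  obtain ⟨v₀, hv₀⟩ := hne
  obtain ⟨i₀, rfl⟩ := List.mem_iff_get.1 (hS _ hv₀)
  obtain ⟨i, hi, hlast⟩ :=
    (Finset.univ.filter fun i => L.get i ∈ S).exists_max_image id ⟨i₀, by simpa using hv₀⟩
  obtain ⟨w, hw, hfresh⟩ := hL.2 i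
  refine ⟨L.get i, (Finset.mem_filter.1 hi).2, w, hw, fun x hx hxw => ?_⟩
  obtain ⟨j, rfl⟩ := List.mem_iff_get.1 (hS x hx)
  rcases (hlast j (by simpa using hx)).lt_or_eq with hj | rfl
  · exact absurd hxw (hfresh j hj)
  · rfl

theorem exists_notMem_of_forall_adj_adj_mem [G.LocallyFinite] (hL : IsOpenLegal G L)
    (hdeg : ∀ w, 2 ≤ G.degree w) {S : Set α} (hne : S.Nonempty)
    (hS : ∀ v ∈ S, ∀ w x, G.Adj v w → G.Adj w x → x ∈ S) : ∃ v ∈ S, v ∉ L := by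
  by_contra! hall
  obtain ⟨v, hv, w, hvw, hpriv⟩ := hL.exists_private_neighbor hall hne
  have : G.degree w ≤ 1 := by
    rw [← card_neighborFinset_eq_degree]
    refine Finset.card_le_one.2 fun x hx y hy => ?_
    rw [mem_neighborFinset] at hx hy
    rw [hpriv x (hS v hv w x hvw hx) hx.symm, hpriv y (hS v hv w y hvw hy) hy.symm]
  have := hdeg w
  omega

theorem exists_notMem_of_coloring [G.LocallyFinite] [Nonempty α] (hL : IsOpenLegal G L)
    (C : G.Coloring Bool) (hdeg : ∀ w, 2 ≤ G.degree w) (b : Bool) : ∃ v, C v = b ∧ v ∉ L := by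
  have hne : {v | C v = b}.Nonempty := by
    obtain ⟨w⟩ := ‹Nonempty α›
    obtain ⟨x, hx⟩ := (G.degree_pos_iff_exists_adj w).1 (by linarith [hdeg w])
    by_cases hw : C w = b
    · exact ⟨w, hw⟩
    · refine ⟨x, show C x = b from ?_⟩
      rw [Bool.eq_not_iff.2 (C.valid hx).symm, Bool.eq_not_iff.2 hw, Bool.not_not]
  simpa using hL.exists_notMem_of_forall_adj_adj_mem hdeg hne fun v hv w x hvw hwx => by
    change C v = b at hv
    change C x = b
    rw [Bool.eq_not_iff.2 (C.valid hwx).symm, Bool.eq_not_iff.2 (C.valid hvw).symm,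
      Bool.not_not]
    exact hv

end IsOpenLegal

namespace SimpleGraph

def pathGraph.castLE {k m : ℕ} (h : k ≤ m) : pathGraph k ↪g pathGraph m where
  toEmbedding := Fin.castLEEmb h
  map_rel_iff' := by simp [pathGraph_adj]

def pathGraph.castLECycle {k m : ℕ} (h : k < m) : pathGraph k ↪g cycleGraph m where
  toEmbedding := Fin.castLEEmb h.le
  map_rel_iff' {u v} := by
    have hu := u.isLt
    have hv := v.isLt
    simp only [Fin.castLEEmb_apply]
    rw [cycleGraph_adj', pathGraph_adj]
    have hsub : ∀ x y : Fin k, ((Fin.castLE h.le x - Fin.castLE h.le y : Fin m) : ℕ) =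
        if y ≤ x then x.val - y.val else m + x.val - y.val := fun x y => by
      split_ifs with hxy
      · exact Fin.coe_sub_iff_le.2 hxy
      · exact Fin.coe_sub_iff_lt.2 (not_le.1 hxy)
    rw [hsub, hsub]
    simp only [Fin.le_def]
    split_ifs <;> omega

theorem cycleGraph_two_le_degree {n : ℕ} (hn : 3 ≤ n) (v : Fin n) :
    2 ≤ (cycleGraph n).degree v := by
  obtain ⟨m, rfl⟩ := Nat.exists_eq_add_of_le' hn
  rw [cycleGraph_degree_three_le]

end SimpleGraph

/-- Even vertices `0, 2, …, 2h-2` upwards, each with witness its right neighbour, then odd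
vertices `2h-1, …, 3, 1` downwards, each with witness its left neighbour. -/
theorem exists_isOpenLegal_of_pathGraph_embedding {β : Type*} {H : SimpleGraph β} (h : ℕ)
    (f : pathGraph (2 * h) ↪g H) : ∃ L, IsOpenLegal H L ∧ L.length = 2 * h := by
  let v : Fin (2 * h) → Fin (2 * h) := fun i =>
    ⟨if i.val < h then 2 * i.val else 4 * h - 1 - 2 * i.val, by split_ifs <;> omega⟩
  let w : Fin (2 * h) → Fin (2 * h) := fun i =>
    ⟨if i.val < h then 2 * i.val + 1 else 4 * h - 2 - 2 * i.val, by split_ifs <;> omega⟩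
  refine ⟨List.ofFn (f ∘ v), isOpenLegal_ofFn (w := f ∘ w) ?_ ?_ ?_, List.length_ofFn⟩
  · refine f.injective.comp fun i j hij => Fin.ext ?_
    simp only [v, Fin.ext_iff] at hij
    split_ifs at hij <;> omega
  · intro i
    simp only [Function.comp_apply, f.map_adj_iff, pathGraph_adj, v, w]
    split_ifs <;> omega
  · intro i j hji
    simp only [Function.comp_apply, f.map_adj_iff, pathGraph_adj, v, w, Fin.lt_def] at hji ⊢
    split_ifs <;> omega

theorem IsOpenLegal.length_lt_of_cycleGraph {n : ℕ} (hn : 3 ≤ n) {L : List (Fin n)}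
    (hL : IsOpenLegal (cycleGraph n) L) : L.length < n := by
  have : Nonempty (Fin n) := ⟨⟨0, by omega⟩⟩
  obtain ⟨v, -, hv⟩ := hL.exists_notMem_of_forall_adj_adj_mem (cycleGraph_two_le_degree hn)
    Set.univ_nonempty fun _ _ _ _ _ _ => Set.mem_univ _
  simpa using hL.1.length_add_card_le (s := {v}) (by simpa using hv)

theorem IsOpenLegal.length_add_two_le_of_cycleGraph {n : ℕ} (hn : 3 ≤ n) (he : Even n)
    {L : List (Fin n)} (hL : IsOpenLegal (cycleGraph n) L) : L.length + 2 ≤ n := by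
  have : Nonempty (Fin n) := ⟨⟨0, by omega⟩⟩
  let C := cycleGraph.bicoloring_of_even n he
  obtain ⟨a, ha, haL⟩ := hL.exists_notMem_of_coloring C (cycleGraph_two_le_degree hn) true
  obtain ⟨b, hb, hbL⟩ := hL.exists_notMem_of_coloring C (cycleGraph_two_le_degree hn) false
  have hab : a ≠ b := by rintro rfl; simp [ha] at hb
  simpa [Finset.card_pair hab] using
    hL.1.length_add_card_le (s := {a, b}) (by simp [haL, hbL])

theorem grundyT_path_cycle :
    (∀ n : ℕ, 2 ≤ n → grundyT (pathGraph n) = if Even n then n else n - 1) ∧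
      (∀ n : ℕ, 3 ≤ n → grundyT (cycleGraph n) = if Even n then n - 2 else n - 1) := by
  refine ⟨fun n hn => ?_, fun n hn => ?_⟩
  · obtain ⟨h, rfl | rfl⟩ := Nat.even_or_odd' n
    · rw [if_pos (even_two_mul h)]
      refine grundyT_eq_of_forall_le (fun L hL => ?_)
        (exists_isOpenLegal_of_pathGraph_embedding h Embedding.refl)
      simpa using hL.1.length_le_card
    · rw [if_neg (Nat.not_even_two_mul_add_one h), Nat.add_sub_cancel]
      refine grundyT_eq_of_forall_le (fun L hL => ?_)
        (exists_isOpenLegal_of_pathGraph_embedding h (pathGraph.castLE (by omega)))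
      have := hL.length_lt_card_of_odd (pathGraph.bicoloring _) (by simp)
      simp only [Fintype.card_fin] at this
      omega
  · obtain ⟨h, rfl | rfl⟩ := Nat.even_or_odd' n
    · obtain ⟨k, rfl⟩ : ∃ k, h = k + 1 := ⟨h - 1, by omega⟩
      rw [if_pos (even_two_mul _), show 2 * (k + 1) - 2 = 2 * k by omega]
      refine grundyT_eq_of_forall_le (fun L hL => ?_)
        (exists_isOpenLegal_of_pathGraph_embedding k (pathGraph.castLECycle (by omega)))
      have := hL.length_add_two_le_of_cycleGraph hn (even_two_mul _)
      omega
    · rw [if_neg (Nat.not_even_two_mul_add_one h), Nat.add_sub_cancel]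
      refine grundyT_eq_of_forall_le (fun L hL => ?_)
        (exists_isOpenLegal_of_pathGraph_embedding h (pathGraph.castLECycle (by omega)))
      have := hL.length_lt_of_cycleGraph hn
      omega
end
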